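/- For every nonempty coordinated shape X ⊂ ℤ², the grid graph induced by the 2-scaling X² has a Hamiltonian cycle, i.e., a cycle that visits every point of X² exactly once. -/

import Mathlib

/-- The `c`-scaling of a set `X ⊆ ℤ²`:
`X^c = {(a,b) : (⌊a/c⌋, ⌊b/c⌋) ∈ X}` (floor division). -/
def scaling (X : Set (ℤ × ℤ)) (c : ℕ) : Set (ℤ × ℤ) :=
  {p | (Int.fdiv p.1 (c : ℤ), Int.fdiv p.2 (c : ℤ)) ∈ X}

/-- The grid graph induced by `Y ⊆ ℤ²`: vertices are the points of `Y` and edges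
connect exactly those pairs of points at `ℓ¹`-distance 1. -/
def gridGraph (Y : Set (ℤ × ℤ)) : SimpleGraph Y where
  Adj p q := |p.1.1 - q.1.1| + |p.1.2 - q.1.2| = 1
  symm := by
    constructor
    intro p q h
    rw [abs_sub_comm, abs_sub_comm (q.1.2)]
    exact h
  loopless := by
    constructor
    intro p h
    simp at h

/-!
Induction on the number of cells. A finite connected shape with at least two cells has a cell `c`
whose removal leaves it connected (a leaf of a spanning tree), and `c` has a neighbour `d` in the
rest. The induction carries a stronger invariant: the Hamiltonian cycle of `X²` runs along every
boundary side, i.e. every side of the 2 × 2 block of a cell of `X` that faces a cell outside `X`.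
When `c` is added, the side of the block of `d` facing `c` is then an edge `s(p, q)` of the cycle;
replacing it by the path from `p` around the block of `c` to `q` gives a Hamiltonian cycle of the
larger shape, and that path contains the three other sides of the block of `c`.
-/

open SimpleGraph

section CycleSupport

variable {V : Type*}

def chainEdges : List V → List (Sym2 V)
  | a :: b :: l => s(a, b) :: chainEdges (b :: l)
  | _ => []

@[simp] lemma chainEdges_nil : chainEdges ([] : List V) = [] := rfl

@[simp] lemma chainEdges_singleton (a : V) : chainEdges [a] = [] := rfl

@[simp] lemma chainEdges_cons_cons (a b : V) (l : List V) :
    chainEdges (a :: b :: l) = s(a, b) :: chainEdges (b :: l) := rfl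

lemma chainEdges_append_cons (A : List V) (x : V) (B : List V) :
    chainEdges (A ++ x :: B) = chainEdges (A ++ [x]) ++ chainEdges (x :: B) := by
  induction A with
  | nil => simp
  | cons a A ih =>
    cases A with
    | nil => simp
    | cons a' A => simpa using ih

lemma chainEdges_reverse (l : List V) : chainEdges l.reverse = (chainEdges l).reverse := by
  induction l with
  | nil => rfl
  | cons a l ih =>
    cases l with
    | nil => rfl
    | cons b l =>
      rw [List.reverse_cons, List.reverse_cons, List.append_assoc, List.singleton_append,
        chainEdges_append_cons, ← List.reverse_cons, ih]
      simp [Sym2.eq_swap]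

lemma exists_eq_append_of_mem_chainEdges {l : List V} {p q : V} (h : s(p, q) ∈ chainEdges l) :
    ∃ A B, l = A ++ p :: q :: B ∨ l = A ++ q :: p :: B := by
  induction l with
  | nil => simp at h
  | cons a l ih =>
    cases l with
    | nil => simp at h
    | cons b l =>
      rcases List.mem_cons.1 h with h | h
      · rcases Sym2.eq_iff.1 h with ⟨rfl, rfl⟩ | ⟨rfl, rfl⟩
        exacts [⟨[], l, .inl rfl⟩, ⟨[], l, .inr rfl⟩]
      · obtain ⟨A, B, hl | hl⟩ := ih h
        exacts [⟨a :: A, B, .inl (by simp [hl])⟩, ⟨a :: A, B, .inr (by simp [hl])⟩]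

lemma mem_chainEdges_splice {A M B : List V} {p q : V} {E : Sym2 V}
    (h : E ∈ chainEdges (A ++ p :: q :: B) ∧ E ≠ s(p, q) ∨ E ∈ chainEdges (p :: (M ++ [q]))) :
    E ∈ chainEdges (A ++ p :: (M ++ q :: B)) := by
  have hsplit : chainEdges (A ++ p :: (M ++ q :: B)) =
      chainEdges (A ++ [p]) ++ chainEdges (p :: (M ++ [q])) ++ chainEdges (q :: B) := by
    rw [chainEdges_append_cons A p, ← List.cons_append, chainEdges_append_cons (p :: M) q B]
    simp
  rw [hsplit]
  rw [chainEdges_append_cons] at h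
  simp only [chainEdges_cons_cons, List.mem_append, List.mem_cons] at h ⊢
  tauto

lemma tail_append_cons_append_perm (A M N : List V) (p : V) :
    (A ++ p :: (M ++ N)).tail.Perm (M ++ (A ++ p :: N).tail) := by
  cases A with
  | nil => exact .refl _
  | cons a A =>
    simpa using (List.perm_append_comm (l₁ := A ++ [p]) (l₂ := M)).append_right N

variable {G : SimpleGraph V}

structure IsCycleSupport (G : SimpleGraph V) (L : List V) : Prop where
  isChain : L.IsChain G.Adj
  head?_eq_getLast? : L.head? = L.getLast?
  nodup_tail : L.tail.Nodup
  four_le_length : 4 ≤ L.length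

lemma IsCycleSupport.splice {A M B : List V} {p q : V}
    (hL : IsCycleSupport G (A ++ p :: q :: B)) (hM : (p :: (M ++ [q])).IsChain G.Adj)
    (hMnd : M.Nodup) (hfresh : ∀ x ∈ M, x ∉ A ++ p :: q :: B) :
    IsCycleSupport G (A ++ p :: (M ++ q :: B)) where
  isChain := by
    have hold := List.isChain_split.1 hL.isChain
    refine List.isChain_split.2 ⟨hold.1, ?_⟩
    rw [← List.cons_append]
    exact List.isChain_split.2 ⟨by simpa using hM, hold.2.of_cons⟩
  head?_eq_getLast? := by
    have hlast (N : List V) : (A ++ p :: (N ++ q :: B)).getLast? = (q :: B).getLast? := by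
      rw [show A ++ p :: (N ++ q :: B) = (A ++ p :: N) ++ q :: B by simp,
        List.getLast?_append_cons]
    have h := hL.head?_eq_getLast?
    rw [show (A ++ p :: q :: B).getLast? = (q :: B).getLast? from hlast []] at h
    rw [hlast M, ← h]
    cases A <;> rfl
  nodup_tail := by
    refine (tail_append_cons_append_perm A M (q :: B) p).nodup_iff.2
      (List.nodup_append.2 ⟨hMnd, hL.nodup_tail, ?_⟩)
    rintro x hxM y hy rfl
    exact hfresh x hxM (List.mem_of_mem_tail hy)
  four_le_length := by
    have := hL.four_le_length
    simp only [List.length_append, List.length_cons] at this ⊢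
    omega

lemma IsCycleSupport.exists_isCycle {L : List V} (hL : IsCycleSupport G L) :
    ∃ v, ∃ w : G.Walk v v, w.IsCycle ∧ w.support = L := by
  obtain ⟨a, b, l, rfl⟩ : ∃ a b l, L = a :: b :: l := by
    match L, hL.four_le_length with
    | a :: b :: l, _ => exact ⟨a, b, l, rfl⟩
  have hlast : (b :: l).getLast (List.cons_ne_nil b l) = a := by
    simpa [List.getLast?_eq_some_getLast] using hL.head?_eq_getLast?.symm
  obtain ⟨p, hp⟩ : ∃ p : G.Walk b a, p.support = b :: l :=
    ⟨(Walk.ofSupport _ _ hL.isChain.of_cons).copy (List.head_cons ..) hlast, by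
      rw [Walk.support_copy, Walk.support_ofSupport]⟩
  refine ⟨a, .cons hL.isChain.rel p, ?_, by simp [hp]⟩
  have hpath : p.IsPath := (Walk.isPath_def _).2 (by simpa [hp] using hL.nodup_tail)
  refine (Walk.cons_isCycle_iff p hL.isChain.rel).2 ⟨hpath, fun hab => ?_⟩
  have h1 := hpath.length_eq_one_of_mem_edges (Sym2.eq_swap ▸ hab)
  have h2 := congrArg List.length hp
  have h3 := hL.four_le_length
  simp only [Walk.length_support, List.length_cons] at h1 h2 h3
  omega

lemma SimpleGraph.Walk.IsCycle.isHamiltonianCycle_induce [DecidableEq V] {S : Set V} {v : V}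
    {w : G.Walk v v} (hw : w.IsCycle) (hS : ∀ x, x ∈ w.support ↔ x ∈ S) :
    (w.induce S fun x hx => (hS x).1 hx).IsHamiltonianCycle := by
  have hc : (w.induce S fun x hx => (hS x).1 hx).IsCycle :=
    .of_map (f := (Embedding.induce S).toHom) (by rw [Walk.map_induce]; exact hw)
  refine Walk.isHamiltonianCycle_iff_isCycle_and_support_count_tail_eq_one.2 ⟨hc, fun a => ?_⟩
  refine @List.count_eq_one_of_mem _ instBEqOfDecidableEq _ _ _ hc.support_nodup ?_
  have ha : a.1 ∈ w.support.tail := by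
    rcases (Walk.mem_support_iff w).1 ((hS a).2 a.2) with h | h
    · exact h ▸ Walk.end_mem_tail_support hw.not_nil
    · exact h
  simpa [Walk.support_induce, List.tail_attachWith] using ha

end CycleSupport

def grid : SimpleGraph (ℤ × ℤ) where
  Adj p q := |p.1 - q.1| + |p.2 - q.2| = 1
  symm := ⟨fun p q h => by rwa [abs_sub_comm, abs_sub_comm q.2]⟩
  loopless := ⟨fun p h => by simp at h⟩

lemma grid_adj_iff {x y : ℤ × ℤ} : grid.Adj x y ↔
    x.1 = y.1 ∧ (x.2 = y.2 + 1 ∨ y.2 = x.2 + 1) ∨ x.2 = y.2 ∧ (x.1 = y.1 + 1 ∨ y.1 = x.1 + 1) := by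
  change |x.1 - y.1| + |x.2 - y.2| = 1 ↔ _
  rcases abs_cases (x.1 - y.1) with ⟨h1, h1'⟩ | ⟨h1, h1'⟩ <;>
    rcases abs_cases (x.2 - y.2) with ⟨h2, h2'⟩ | ⟨h2, h2'⟩ <;> omega

lemma grid_adj_zero_iff {f : ℤ × ℤ} :
    grid.Adj 0 f ↔ f = (1, 0) ∨ f = (-1, 0) ∨ f = (0, 1) ∨ f = (0, -1) := by
  simp only [grid_adj_iff, Prod.fst_zero, Prod.snd_zero, Prod.ext_iff]
  omega

lemma grid_adj_iff_adj_zero_sub {x y : ℤ × ℤ} : grid.Adj x y ↔ grid.Adj 0 (y - x) := by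
  simp only [grid_adj_iff, Prod.fst_zero, Prod.snd_zero, Prod.fst_sub, Prod.snd_sub]
  omega

def cell (x : ℤ × ℤ) : ℤ × ℤ := (x.1 / 2, x.2 / 2)

lemma mem_scaling_two {X : Set (ℤ × ℤ)} {x : ℤ × ℤ} : x ∈ scaling X 2 ↔ cell x ∈ X := by
  simp [scaling, cell, Int.fdiv_eq_ediv_of_nonneg]

def blockCycle (c : ℤ × ℤ) : List (ℤ × ℤ) :=
  [(2 * c.1, 2 * c.2), (2 * c.1 + 1, 2 * c.2), (2 * c.1 + 1, 2 * c.2 + 1), (2 * c.1, 2 * c.2 + 1),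
    (2 * c.1, 2 * c.2)]

lemma isCycleSupport_blockCycle (c : ℤ × ℤ) : IsCycleSupport grid (blockCycle c) where
  isChain := by simp [blockCycle, grid_adj_iff]
  head?_eq_getLast? := rfl
  nodup_tail := by simp [blockCycle]
  four_le_length := by simp [blockCycle]

lemma mem_blockCycle {c x : ℤ × ℤ} : x ∈ blockCycle c ↔ cell x = c := by
  simp only [blockCycle, cell, List.mem_cons, List.not_mem_nil, or_false, Prod.ext_iff]
  omega

lemma mem_chainEdges_blockCycle {c x y : ℤ × ℤ} (hxy : grid.Adj x y) (hx : cell x = c)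
    (hy : cell y = c) : s(x, y) ∈ chainEdges (blockCycle c) := by
  rw [← mem_blockCycle] at hx hy
  simp only [blockCycle, List.mem_cons, List.not_mem_nil, or_false] at hx hy
  rw [grid_adj_iff] at hxy
  rcases hx with rfl | rfl | rfl | rfl | rfl <;> rcases hy with rfl | rfl | rfl | rfl | rfl <;>
    simp [blockCycle, Sym2.eq_swap] at hxy ⊢

/-- `s(x, y)` is a side of the block of a cell of `X`, and the block across it, in direction `f`,
is that of a cell outside `X`. -/
def IsBoundarySide (X : Set (ℤ × ℤ)) (x y : ℤ × ℤ) : Prop :=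
  grid.Adj x y ∧ cell x = cell y ∧ cell x ∈ X ∧
    ∃ f, grid.Adj 0 f ∧ cell (x + f) ∉ X ∧ cell (y + f) ∉ X

lemma IsBoundarySide.of_insert {X : Set (ℤ × ℤ)} {c x y : ℤ × ℤ}
    (h : IsBoundarySide (insert c X) x y) (hx : cell x ≠ c) : IsBoundarySide X x y := by
  obtain ⟨hxy, hcell, hX, f, hf, hxf, hyf⟩ := h
  exact ⟨hxy, hcell, (Set.mem_insert_iff.1 hX).resolve_left hx, f, hf,
    fun h => hxf (Set.mem_insert_of_mem c h), fun h => hyf (Set.mem_insert_of_mem c h)⟩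

lemma IsBoundarySide.sym2_ne {X : Set (ℤ × ℤ)} {x y p q : ℤ × ℤ} (h : IsBoundarySide X x y)
    (hpq : ∀ g, grid.Adj 0 g → cell (p + g) ∈ X ∨ cell (q + g) ∈ X) : s(x, y) ≠ s(p, q) := by
  obtain ⟨-, -, -, f, hf, hxf, hyf⟩ := h
  intro hxy
  rcases Sym2.eq_iff.1 hxy with ⟨rfl, rfl⟩ | ⟨rfl, rfl⟩ <;> have := hpq f hf <;> tauto

structure IsBoundaryCycle (X : Set (ℤ × ℤ)) (L : List (ℤ × ℤ)) : Prop where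
  isCycleSupport : IsCycleSupport grid L
  mem_iff : ∀ x, x ∈ L ↔ cell x ∈ X
  boundary_mem : ∀ x y, IsBoundarySide X x y → s(x, y) ∈ chainEdges L

lemma isBoundaryCycle_singleton (c : ℤ × ℤ) : IsBoundaryCycle {c} (blockCycle c) where
  isCycleSupport := isCycleSupport_blockCycle c
  mem_iff _ := mem_blockCycle
  boundary_mem _ _ h := mem_chainEdges_blockCycle h.1 h.2.2.1 (h.2.1 ▸ h.2.2.1)

lemma IsBoundaryCycle.splice {X : Set (ℤ × ℤ)} {A M B : List (ℤ × ℤ)} {c p q : ℤ × ℤ}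
    (hL : IsBoundaryCycle X (A ++ p :: q :: B)) (hc : c ∉ X)
    (hpq : ∀ g, grid.Adj 0 g → cell (p + g) ∈ insert c X ∨ cell (q + g) ∈ insert c X)
    (hM : (p :: (M ++ [q])).IsChain grid.Adj) (hMnd : M.Nodup) (hMc : ∀ x, x ∈ M ↔ cell x = c)
    (hMsides : ∀ x y, IsBoundarySide (insert c X) x y → cell x = c →
      s(x, y) ∈ chainEdges (p :: (M ++ [q]))) :
    IsBoundaryCycle (insert c X) (A ++ p :: (M ++ q :: B)) where
  isCycleSupport := hL.isCycleSupport.splice hM hMnd fun x hx hxL =>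
    hc ((hMc x).1 hx ▸ (hL.mem_iff x).1 hxL)
  mem_iff x := by
    have hx := hL.mem_iff x
    have hxM := hMc x
    simp only [List.mem_append, List.mem_cons, Set.mem_insert_iff] at hx ⊢
    tauto
  boundary_mem x y h := by
    by_cases hx : cell x = c
    · exact mem_chainEdges_splice (.inr (hMsides x y h hx))
    · exact mem_chainEdges_splice (.inl ⟨hL.boundary_mem x y (h.of_insert hx), h.sym2_ne hpq⟩)

/-- `s(p, q)` is the side of the block of `d` facing `c`, and `p, n₁, n₂, n₃, n₄, q` runs around
the block of `c`, whose side facing `d` is `s(n₁, n₄)`. Once `c` and `d` both lie in the shape,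
neither of these two sides is a boundary side (`interior_pq`, `interior_n`). -/
structure IsDetour (c d p q n₁ n₂ n₃ n₄ : ℤ × ℤ) : Prop where
  adj : grid.Adj p q
  cell_p : cell p = d
  cell_q : cell q = d
  across : n₁ - p = n₄ - q
  isChain : [p, n₁, n₂, n₃, n₄, q].IsChain grid.Adj
  nodup : [n₁, n₂, n₃, n₄].Nodup
  mem_iff : ∀ x, x ∈ [n₁, n₂, n₃, n₄] ↔ cell x = c
  interior_pq : ∀ g, grid.Adj 0 g →
    cell (p + g) ∈ ({c, d} : Set (ℤ × ℤ)) ∨ cell (q + g) ∈ ({c, d} : Set (ℤ × ℤ))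
  interior_n : ∀ g, grid.Adj 0 g →
    cell (n₁ + g) ∈ ({c, d} : Set (ℤ × ℤ)) ∨ cell (n₄ + g) ∈ ({c, d} : Set (ℤ × ℤ))
  blockCycle_subset : ∀ E ∈ chainEdges (blockCycle c),
    E = s(n₁, n₄) ∨ E ∈ chainEdges [n₁, n₂, n₃, n₄]

lemma exists_isDetour {c d : ℤ × ℤ} (h : grid.Adj c d) :
    ∃ p q n₁ n₂ n₃ n₄, IsDetour c d p q n₁ n₂ n₃ n₄ := by
  obtain ⟨c₁, c₂⟩ := c
  rcases grid_adj_zero_iff.1 (grid_adj_iff_adj_zero_sub.1 h) with hd | hd | hd | hd <;>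
    obtain rfl := sub_eq_iff_eq_add'.1 hd
  on_goal 1 => refine ⟨(2 * c₁ + 2, 2 * c₂), (2 * c₁ + 2, 2 * c₂ + 1), (2 * c₁ + 1, 2 * c₂),
    (2 * c₁, 2 * c₂), (2 * c₁, 2 * c₂ + 1), (2 * c₁ + 1, 2 * c₂ + 1), ?_⟩
  on_goal 2 => refine ⟨(2 * c₁ - 1, 2 * c₂), (2 * c₁ - 1, 2 * c₂ + 1), (2 * c₁, 2 * c₂),
    (2 * c₁ + 1, 2 * c₂), (2 * c₁ + 1, 2 * c₂ + 1), (2 * c₁, 2 * c₂ + 1), ?_⟩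
  on_goal 3 => refine ⟨(2 * c₁, 2 * c₂ + 2), (2 * c₁ + 1, 2 * c₂ + 2), (2 * c₁, 2 * c₂ + 1),
    (2 * c₁, 2 * c₂), (2 * c₁ + 1, 2 * c₂), (2 * c₁ + 1, 2 * c₂ + 1), ?_⟩
  on_goal 4 => refine ⟨(2 * c₁, 2 * c₂ - 1), (2 * c₁ + 1, 2 * c₂ - 1), (2 * c₁, 2 * c₂),
    (2 * c₁, 2 * c₂ + 1), (2 * c₁ + 1, 2 * c₂ + 1), (2 * c₁ + 1, 2 * c₂), ?_⟩
  all_goals constructor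
  all_goals first
    | (intro g hg; rcases grid_adj_zero_iff.1 hg with rfl | rfl | rfl | rfl <;>
        simp [cell] <;> omega)
    | (intro x; simp [cell, Prod.ext_iff]; omega)
    | (simp [grid_adj_iff, cell, blockCycle, Prod.ext_iff]; try omega)

lemma IsBoundaryCycle.exists_insert {X : Set (ℤ × ℤ)} {L : List (ℤ × ℤ)} {c d : ℤ × ℤ}
    (hL : IsBoundaryCycle X L) (hc : c ∉ X) (hd : d ∈ X) (hcd : grid.Adj c d) :
    ∃ L', IsBoundaryCycle (insert c X) L' := by
  obtain ⟨p, q, n₁, n₂, n₃, n₄, hD⟩ := exists_isDetour hcd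
  have hcdX : ({c, d} : Set (ℤ × ℤ)) ⊆ insert c X :=
    Set.insert_subset_insert (Set.singleton_subset_iff.2 hd)
  have hn₁ : cell n₁ = c := (hD.mem_iff n₁).1 (by simp)
  have hn₄ : cell n₄ = c := (hD.mem_iff n₄).1 (by simp)
  have hside : IsBoundarySide X p q :=
    ⟨hD.adj, hD.cell_p.trans hD.cell_q.symm, hD.cell_p ▸ hd, n₁ - p,
      grid_adj_iff_adj_zero_sub.1 hD.isChain.rel, by simpa [hn₁] using hc,
      by simpa [hD.across, hn₄] using hc⟩
  have hpq : ∀ g, grid.Adj 0 g → cell (p + g) ∈ insert c X ∨ cell (q + g) ∈ insert c X :=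
    fun g hg => (hD.interior_pq g hg).imp (hcdX ·) (hcdX ·)
  have hsides : ∀ x y, IsBoundarySide (insert c X) x y → cell x = c →
      s(x, y) ∈ chainEdges (p :: ([n₁, n₂, n₃, n₄] ++ [q])) := by
    intro x y h hx
    rcases hD.blockCycle_subset _ (mem_chainEdges_blockCycle h.1 hx (h.2.1 ▸ hx)) with he | he
    · exact absurd he (h.sym2_ne fun g hg => (hD.interior_n g hg).imp (hcdX ·) (hcdX ·))
    · simp only [chainEdges_cons_cons, List.cons_append, List.nil_append, List.mem_cons] at he ⊢
      tauto
  obtain ⟨A, B, rfl | rfl⟩ := exists_eq_append_of_mem_chainEdges (hL.boundary_mem p q hside)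
  · exact ⟨_, hL.splice hc hpq (by simpa using hD.isChain) hD.nodup hD.mem_iff hsides⟩
  · refine ⟨_, hL.splice (M := [n₁, n₂, n₃, n₄].reverse) hc (fun g hg => (hpq g hg).symm) ?_
      (List.nodup_reverse.2 hD.nodup) (fun x => List.mem_reverse.trans (hD.mem_iff x))
      fun x y h hx => ?_⟩
    · simpa using List.isChain_reverse.2 (hD.isChain.imp fun _ _ h => h.symm)
    · rw [show q :: ([n₁, n₂, n₃, n₄].reverse ++ [p]) = (p :: ([n₁, n₂, n₃, n₄] ++ [q])).reverse
        by simp, chainEdges_reverse, List.mem_reverse]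
      exact hsides x y h hx

lemma connected_induce_diff_singleton {V : Type*} {G : SimpleGraph V} {S : Set V} {v : S}
    (h : ((G.induce S).induce {v}ᶜ).Connected) : (G.induce (S \ {v.1})).Connected :=
  h.map ⟨fun u => ⟨u.1.1, u.1.2, fun hu => u.2 (Subtype.ext hu)⟩, id⟩
    fun u => ⟨⟨⟨u.1, u.2.1⟩, fun hu => u.2.2 (congrArg Subtype.val hu)⟩, rfl⟩

theorem exists_isBoundaryCycle {X : Set (ℤ × ℤ)} (hfin : X.Finite) (hne : X.Nonempty)
    (hconn : (gridGraph X).Connected) : ∃ L, IsBoundaryCycle X L := by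
  obtain ⟨n, hn⟩ : ∃ n, X.ncard = n + 1 := Nat.exists_eq_add_one.2 ((Set.ncard_pos hfin).2 hne)
  induction n generalizing X with
  | zero =>
    obtain ⟨c, rfl⟩ := Set.ncard_eq_one.1 hn
    exact ⟨_, isBoundaryCycle_singleton c⟩
  | succ n ih =>
    have : Finite X := hfin.to_subtype
    have : Nontrivial X := Set.nontrivial_coe_sort.2 ((Set.one_lt_ncard hfin).1 (by omega))
    obtain ⟨c, hc⟩ := hconn.exists_connected_induce_compl_singleton_of_finite_nontrivial
    obtain ⟨d, hcd⟩ := hconn.preconnected.exists_adj_of_nontrivial c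
    have hd : d.1 ∈ X \ {c.1} := ⟨d.2, fun h => hcd.ne (Subtype.ext h.symm)⟩
    obtain ⟨L, hL⟩ := ih hfin.sdiff ⟨_, hd⟩ (connected_induce_diff_singleton (G := grid) hc)
      (by rw [Set.ncard_sdiff_singleton_of_mem c.2]; omega)
    have := hL.exists_insert (fun h => h.2 rfl) hd hcd
    rwa [Set.insert_sdiff_singleton, Set.insert_eq_of_mem c.2] at this

/-- For every nonempty coordinated shape `X ⊂ ℤ²` (finite, with connected grid graph),
the grid graph induced by the 2-scaling `X²` has a Hamiltonian cycle. -/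
theorem scaling_two_hamiltonian (X : Set (ℤ × ℤ)) (hfin : X.Finite) (hne : X.Nonempty)
    (hconn : (gridGraph X).Connected) :
    ∃ (v : scaling X 2) (w : (gridGraph (scaling X 2)).Walk v v),
      w.IsHamiltonianCycle := by
  obtain ⟨L, hL⟩ := exists_isBoundaryCycle hfin hne hconn
  obtain ⟨v, w, hw, rfl⟩ := hL.isCycleSupport.exists_isCycle
  have hS : ∀ x, x ∈ w.support ↔ x ∈ scaling X 2 :=
    fun x => (hL.mem_iff x).trans mem_scaling_two.symm
  exact ⟨_, _, hw.isHamiltonianCycle_induce hS⟩
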